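/- arXiv:2303.06924 — 7 statements merged into one kernel-verified Lean document; each statement's English description precedes it below -/
import Mathlib

section
/- The Hessian matrix of the modified energy function η(U) = (1/2)h(v₁²+v₂²) + (1/2)gh² + ghb + γgb², viewed as a function of the conservative variables U = (h, hv₁, hv₂, b), equals (1/h) times the 4×4 matrix with rows (gh+v₁²+v₂², -v₁, -v₂, gh), (-v₁, 1, 0, 0), (-v₂, 0, 1, 0), (gh, 0, 0, 2γgh), and this matrix is positive definite whenever h > 0, g > 0, and γ > 1/2. -/
/-! On `h ≠ 0` the gradient of `η` is `(gh + gb - (v₁² + v₂²)/2, v₁, v₂, gh + 2γgb)`, and the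
Hessian is its Jacobian at `U`. Its quadratic form is
`(1/h) ((x₁ - v₁x₀)² + (x₂ - v₂x₀)² + gh (x₀ + x₃)² + (2γ - 1) gh x₃²)`, a sum of squares with
positive weights once `γ > 1/2`, which vanishes only at `x = 0`. -/

open Matrix Filter Topology

theorem HasFDerivAt.div {𝕜 E : Type*} [NontriviallyNormedField 𝕜] [NormedAddCommGroup E]
    [NormedSpace 𝕜 E] {c d : E → 𝕜} {c' d' : E →L[𝕜] 𝕜} {x : E}
    (hc : HasFDerivAt c c' x) (hd : HasFDerivAt d d' x) (hx : d x ≠ 0) :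
    HasFDerivAt (fun y => c y / d y) ((d x)⁻¹ • c' - (c x / d x ^ 2) • d') x := by
  simp only [div_eq_mul_inv]
  refine (hc.mul ((hasDerivAt_inv hx).comp_hasFDerivAt x hd)).congr_fderiv ?_
  ext y
  simp only [Function.comp_apply, _root_.add_apply, _root_.sub_apply,
    _root_.smul_apply, smul_eq_mul]
  ring

theorem iteratedFDeriv_two_apply_of_eventually_hasFDerivAt {𝕜 E F : Type*}
    [NontriviallyNormedField 𝕜] [NormedAddCommGroup E] [NormedSpace 𝕜 E]
    [NormedAddCommGroup F] [NormedSpace 𝕜 F] {f : E → F} {f' : E → E →L[𝕜] F} {x : E}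
    (hf : ∀ᶠ y in 𝓝 x, HasFDerivAt f (f' y) y) (v w : E) :
    iteratedFDeriv 𝕜 2 f x ![v, w] = fderiv 𝕜 f' x v w := by
  have hf' : fderiv 𝕜 f =ᶠ[𝓝 x] f' := hf.mono fun _ hy => hy.fderiv
  simp [iteratedFDeriv_two_apply, hf'.fderiv_eq]

namespace ShallowWater

local notation "π" i => ContinuousLinearMap.proj (R := ℝ) (φ := fun _ : Fin 4 => ℝ) i

noncomputable def energy (g γ : ℝ) (u : Fin 4 → ℝ) : ℝ :=
  ((u 1)^2 + (u 2)^2) / (2 * u 0) + (1/2) * g * (u 0)^2 + g * (u 0) * (u 3) + γ * g * (u 3)^2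

noncomputable def energyDeriv (g γ : ℝ) (u : Fin 4 → ℝ) : (Fin 4 → ℝ) →L[ℝ] ℝ :=
  (g * u 0 + g * u 3 - ((u 1)^2 + (u 2)^2) / (2 * (u 0)^2)) • (π 0) + (u 1 / u 0) • (π 1)
    + (u 2 / u 0) • (π 2) + (g * u 0 + 2 * γ * g * u 3) • (π 3)

noncomputable def energyHessian (g γ h v₁ v₂ : ℝ) : Matrix (Fin 4) (Fin 4) ℝ :=
  (1 / h) • !![g * h + v₁^2 + v₂^2, -v₁, -v₂, g * h;
               -v₁, 1, 0, 0;
               -v₂, 0, 1, 0;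
               g * h, 0, 0, 2 * γ * g * h]

variable {g γ : ℝ}

theorem hasFDerivAt_energy {u : Fin 4 → ℝ} (hu : u 0 ≠ 0) :
    HasFDerivAt (energy g γ) (energyDeriv g γ u) u := by
  have p (i : Fin 4) : HasFDerivAt (· i) (π i) u := hasFDerivAt_apply i u
  have := (((HasFDerivAt.div (((p 1).pow 2).add ((p 2).pow 2)) ((p 0).const_mul 2)
    (by simpa)).add (((p 0).pow 2).const_mul (1/2 * g))).add
    (((p 0).const_mul g).mul (p 3))).add (((p 3).pow 2).const_mul (γ * g))
  refine this.congr_fderiv ?_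
  ext w
  simp only [energyDeriv, _root_.add_apply, _root_.sub_apply,
    _root_.smul_apply, ContinuousLinearMap.proj_apply, Pi.add_apply, smul_eq_mul,
    nsmul_eq_mul]
  field_simp
  ring

theorem fderiv_energyDeriv_apply {h : ℝ} (hh : h ≠ 0) (v₁ v₂ b : ℝ) (v w : Fin 4 → ℝ) :
    fderiv ℝ (energyDeriv g γ) ![h, h * v₁, h * v₂, b] v w
      = v ⬝ᵥ (energyHessian g γ h v₁ v₂ *ᵥ w) := by
  have p (i : Fin 4) : HasFDerivAt (· i) (π i) ![h, h * v₁, h * v₂, b] := hasFDerivAt_apply i _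
  have h0 : ![h, h * v₁, h * v₂, b] 0 ≠ 0 := hh
  have : HasFDerivAt (energyDeriv g γ) _ ![h, h * v₁, h * v₂, b] :=
    (((((((p 0).const_mul g).add ((p 3).const_mul g)).sub
      (HasFDerivAt.div (((p 1).pow 2).add ((p 2).pow 2)) (((p 0).pow 2).const_mul 2)
        (by simpa))).smul_const (π 0)).add
      ((HasFDerivAt.div (p 1) (p 0) h0).smul_const (π 1))).add
      ((HasFDerivAt.div (p 2) (p 0) h0).smul_const (π 2))).add
      ((((p 0).const_mul g).add ((p 3).const_mul (2 * γ * g))).smul_const (π 3))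
  rw [this.fderiv]
  simp only [energyHessian, dotProduct, mulVec, Fin.sum_univ_four, _root_.add_apply,
    _root_.sub_apply, _root_.smul_apply, ContinuousLinearMap.proj_apply,
    ContinuousLinearMap.smulRight_apply, Pi.add_apply, smul_eq_mul, nsmul_eq_mul, Matrix.smul_apply,
    of_apply, cons_val', cons_val_fin_one, cons_val_zero, cons_val_one, cons_val]
  field_simp
  ring

theorem energyHessian_isHermitian (h v₁ v₂ : ℝ) : (energyHessian g γ h v₁ v₂).IsHermitian := by
  ext i j
  fin_cases i <;> fin_cases j <;> simp [energyHessian]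

theorem dotProduct_energyHessian_mulVec (h v₁ v₂ : ℝ) (x : Fin 4 → ℝ) :
    x ⬝ᵥ (energyHessian g γ h v₁ v₂ *ᵥ x) = (1 / h) * ((x 1 - v₁ * x 0)^2 + (x 2 - v₂ * x 0)^2
      + g * h * (x 0 + x 3)^2 + (2 * γ - 1) * g * h * (x 3)^2) := by
  simp only [energyHessian, dotProduct, mulVec, Fin.sum_univ_four, Matrix.smul_apply, of_apply,
    cons_val', cons_val_fin_one, cons_val_zero, cons_val_one, cons_val, smul_eq_mul]
  ring

theorem energyHessian_posDef {h : ℝ} (hh : 0 < h) (hg : 0 < g) (hγ : 1 / 2 < γ) (v₁ v₂ : ℝ) :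
    (energyHessian g γ h v₁ v₂).PosDef := by
  refine posDef_iff_dotProduct_mulVec.mpr ⟨energyHessian_isHermitian h v₁ v₂, fun x hx => ?_⟩
  rw [star_trivial, dotProduct_energyHessian_mulVec]
  refine mul_pos (by positivity) ?_
  have hgh : 0 < g * h := mul_pos hg hh
  have hγgh : 0 < (2 * γ - 1) * g * h := by rw [mul_assoc]; exact mul_pos (by linarith) hgh
  have hA := sq_nonneg (x 1 - v₁ * x 0)
  have hB := sq_nonneg (x 2 - v₂ * x 0)
  have hC : 0 ≤ g * h * (x 0 + x 3)^2 := by positivity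
  have hD : 0 ≤ (2 * γ - 1) * g * h * (x 3)^2 := by positivity
  by_contra! hle
  have hsum := le_antisymm hle (by positivity)
  rw [add_eq_zero_iff_of_nonneg (by positivity) hD, add_eq_zero_iff_of_nonneg (by positivity) hC,
    add_eq_zero_iff_of_nonneg hA hB] at hsum
  obtain ⟨⟨⟨hA0, hB0⟩, hC0⟩, hD0⟩ := hsum
  have h3 : x 3 = 0 := by simpa [hγgh.ne'] using hD0
  have h0 : x 0 = 0 := by simpa [hgh.ne', h3] using hC0
  have h1 : x 1 = 0 := by simpa [h0] using hA0
  have h2 : x 2 = 0 := by simpa [h0] using hB0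
  exact hx (by ext i; fin_cases i <;> assumption)

end ShallowWater

/-- The Hessian of the modified energy η(U) with respect to the conservative
variables U = (h, hv₁, hv₂, b) equals (1/h) times the explicit matrix below,
which is positive definite when h > 0, g > 0 and γ > 1/2. -/
theorem energy_hessian (g γ h v₁ v₂ b : ℝ) (hh : 0 < h) (hg : 0 < g) :
    let η : (Fin 4 → ℝ) → ℝ := fun u =>
      ((u 1)^2 + (u 2)^2) / (2 * u 0) + (1/2) * g * (u 0)^2 + g * (u 0) * (u 3)
        + γ * g * (u 3)^2
    let U : Fin 4 → ℝ := ![h, h * v₁, h * v₂, b]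
    let M : Matrix (Fin 4) (Fin 4) ℝ :=
      (1 / h) • !![g * h + v₁^2 + v₂^2, -v₁, -v₂, g * h;
                   -v₁, 1, 0, 0;
                   -v₂, 0, 1, 0;
                   g * h, 0, 0, 2 * γ * g * h]
    (∀ i j, (iteratedFDeriv ℝ 2 η U) ![Pi.single i 1, Pi.single j 1] = M i j) ∧
    (γ > 1/2 → M.PosDef) := by
  intro η U M
  refine ⟨fun i j => ?_, fun hγ => ShallowWater.energyHessian_posDef hh hg hγ v₁ v₂⟩
  have hη : ∀ᶠ u in 𝓝 U, HasFDerivAt η (ShallowWater.energyDeriv g γ u) u :=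
    ((continuous_apply 0).continuousAt.eventually_ne hh.ne').mono
      fun _ hu => ShallowWater.hasFDerivAt_energy hu
  rw [iteratedFDeriv_two_apply_of_eventually_hasFDerivAt hη,
    ShallowWater.fderiv_energyDeriv_apply hh.ne', single_one_dotProduct, mulVec_single_one]
  rfl
end

section
/- The 4×4 Hessian matrix (1/h)·[[gh+v₁²+v₂², -v₁, -v₂, gh], [-v₁, 1, 0, 0], [-v₂, 0, 1, 0], [gh, 0, 0, 2γgh]] is invertible if and only if γ ≠ 1/2, assuming h > 0 and g > 0. -/
open Matrix

/- Eliminating `v₁, v₂` against the identity block in the middle leaves `!![a, a; a, b]`. -/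
theorem det_hessian_block {R : Type*} [CommRing R] (a b v₁ v₂ : R) :
    (!![a + v₁^2 + v₂^2, -v₁, -v₂, a;
        -v₁, 1, 0, 0;
        -v₂, 0, 1, 0;
        a, 0, 0, b] : Matrix (Fin 4) (Fin 4) R).det = a * (b - a) := by
  simp [det_succ_row_zero, Fin.sum_univ_succ, Fin.succAbove]
  ring

/-- The Hessian matrix of the modified energy is invertible iff γ ≠ 1/2. -/
theorem hessian_invertible_iff (g γ h v₁ v₂ : ℝ) (hh : 0 < h) (hg : 0 < g) :
    let M : Matrix (Fin 4) (Fin 4) ℝ :=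
      (1 / h) • !![g * h + v₁^2 + v₂^2, -v₁, -v₂, g * h;
                   -v₁, 1, 0, 0;
                   -v₂, 0, 1, 0;
                   g * h, 0, 0, 2 * γ * g * h]
    IsUnit M ↔ γ ≠ 1/2 := by
  intro M
  have hdet : M.det = ((1 / h) ^ 4 * (g * h) ^ 2) * (2 * γ - 1) := by
    simp only [M, det_smul, det_hessian_block, Fintype.card_fin]
    ring
  have hscale : (1 / h) ^ 4 * (g * h) ^ 2 ≠ 0 := by positivity
  have hγ : 2 * γ = 1 ↔ γ = 1 / 2 := by constructor <;> intro <;> linarith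
  rw [isUnit_iff_isUnit_det, hdet, isUnit_iff_ne_zero, mul_ne_zero_iff_left hscale, sub_ne_zero]
  exact hγ.not
end

section
/- For the reformulated shallow water system, the consistency defect of the energy pair satisfies ∂q_ℓ/∂U - Vᵀ ∂F_ℓ/∂U = (0, 0, 0, ghv_ℓ) for ℓ = 1, 2, where q_ℓ(U) = (1/2)hv_ℓ(v₁²+v₂²) + gh²v_ℓ + ghbv_ℓ, F₁ = (hv₁, hv₁² + (g/2)h², hv₁v₂, 0), F₂ = (hv₂, hv₁v₂, hv₂² + (g/2)h², 0), and V = (g(h+b) - (v₁²+v₂²)/2, v₁, v₂, gh + 2γgb). -/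
/-!
The fluxes are rational in `U` with powers of `h = U 0` as denominators, so at `h ≠ 0` their
gradients follow from the product and reciprocal rules, and the defect becomes an identity
between rational functions of `h, v₁, v₂, b`. Conceptually, `V = ∇η` for the energy
`η = h|v|²/2 + gh²/2 + ghb + γgb²`, `q_ℓ = v_ℓ (η₀ + p)` and `F_ℓ = v_ℓ (h, hv₁, hv₂, 0) + p e_ℓ`
with `η₀ = η - γgb²` and `p = gh²/2`; everything cancels except `v_ℓ ∂η₀/∂b = ghv_ℓ`, which no
flux component balances because `b` is not transported.
-/

open ContinuousLinearMap

local notation "du" i => proj (R := ℝ) (φ := fun _ => ℝ) i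

section

variable {ι : Type*} [Fintype ι] {x : ι → ℝ}

theorem hasFDerivAt_apply_inv {l : ι} (hx : x l ≠ 0) :
    HasFDerivAt (fun u : ι → ℝ => (u l)⁻¹) (-(x l ^ 2)⁻¹ • du l) x :=
  (hasDerivAt_inv hx).comp_hasFDerivAt x (hasFDerivAt_apply l x)

theorem hasFDerivAt_apply_mul_apply_div (i k : ι) {l : ι} (hx : x l ≠ 0) :
    HasFDerivAt (fun u : ι → ℝ => u i * u k / u l)
      ((x k / x l) • (du i) + (x i / x l) • (du k) - (x i * x k / x l ^ 2) • (du l)) x := by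
  refine (((hasFDerivAt_apply i x).mul (hasFDerivAt_apply k x)).mul
    (hasFDerivAt_apply_inv hx)).congr_fderiv ?_ |>.congr_of_eventuallyEq (.of_forall fun u => ?_)
  · ext v; simp; field_simp; ring
  · simp [div_eq_mul_inv]

end

section

variable (g : ℝ) {x : Fin 4 → ℝ}

theorem hasFDerivAt_momentumFlux (ℓ : Fin 4) (hx : x 0 ≠ 0) :
    HasFDerivAt (fun u : Fin 4 → ℝ => u ℓ ^ 2 / u 0 + g / 2 * u 0 ^ 2)
      ((g * x 0 - x ℓ ^ 2 / x 0 ^ 2) • (du 0) + (2 * x ℓ / x 0) • (du ℓ)) x := by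
  refine ((hasFDerivAt_apply_mul_apply_div ℓ ℓ hx).add
    (((hasFDerivAt_apply 0 x).pow 2).const_mul (g / 2))).congr_fderiv ?_
    |>.congr_of_eventuallyEq (.of_forall fun u => ?_)
  · ext v; simp; field_simp; ring
  · simp [sq]

theorem hasFDerivAt_energyFlux (ℓ : Fin 4) (hx : x 0 ≠ 0) :
    HasFDerivAt
      (fun u : Fin 4 → ℝ => 1 / 2 * u ℓ * ((u 1 ^ 2 + u 2 ^ 2) / u 0 ^ 2) + g * u 0 * u ℓ
        + g * u 3 * u ℓ)
      ((g * x ℓ - x ℓ * (x 1 ^ 2 + x 2 ^ 2) / x 0 ^ 3) • (du 0) + (x ℓ * x 1 / x 0 ^ 2) • (du 1)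
        + (x ℓ * x 2 / x 0 ^ 2) • (du 2) + (g * x ℓ) • (du 3)
        + ((x 1 ^ 2 + x 2 ^ 2) / (2 * x 0 ^ 2) + g * (x 0 + x 3)) • (du ℓ)) x := by
  have hp := fun i => hasFDerivAt_apply (𝕜 := ℝ) (F' := fun _ : Fin 4 => ℝ) i x
  refine (((((hp ℓ).mul (((hp 1).pow 2).add ((hp 2).pow 2))).mul
      ((hasFDerivAt_apply_inv hx).pow 2)).const_mul (1 / 2)).add
    ((((hp 0).add (hp 3)).const_mul g).mul (hp ℓ))).congr_fderiv ?_
    |>.congr_of_eventuallyEq (.of_forall fun u => ?_)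
  · ext v; simp; field_simp; ring
  · simp; ring

end

/-- Consistency defect of the energy pair: ∂q_ℓ/∂U − Vᵀ ∂F_ℓ/∂U = (0,0,0,ghv_ℓ)
for ℓ = 1, 2, all derivatives taken with respect to the conservative variables
U = (h, hv₁, hv₂, b). -/
theorem energy_pair_defect (g γ h v₁ v₂ b : ℝ) (hh : 0 < h) :
    let q₁ : (Fin 4 → ℝ) → ℝ := fun u =>
      (1/2) * (u 1) * (((u 1)^2 + (u 2)^2) / (u 0)^2) + g * (u 0) * (u 1)
        + g * (u 3) * (u 1)
    let q₂ : (Fin 4 → ℝ) → ℝ := fun u =>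
      (1/2) * (u 2) * (((u 1)^2 + (u 2)^2) / (u 0)^2) + g * (u 0) * (u 2)
        + g * (u 3) * (u 2)
    let F₁ : (Fin 4 → ℝ) → Fin 4 → ℝ := fun u =>
      ![u 1, (u 1)^2 / u 0 + g / 2 * (u 0)^2, u 1 * u 2 / u 0, 0]
    let F₂ : (Fin 4 → ℝ) → Fin 4 → ℝ := fun u =>
      ![u 2, u 1 * u 2 / u 0, (u 2)^2 / u 0 + g / 2 * (u 0)^2, 0]
    let U : Fin 4 → ℝ := ![h, h * v₁, h * v₂, b]
    let V : Fin 4 → ℝ :=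
      ![g * (h + b) - (v₁^2 + v₂^2) / 2, v₁, v₂, g * h + 2 * γ * g * b]
    (∀ j, fderiv ℝ q₁ U (Pi.single j 1)
        - ∑ i, V i * fderiv ℝ (fun u => F₁ u i) U (Pi.single j 1)
      = (![0, 0, 0, g * h * v₁] : Fin 4 → ℝ) j) ∧
    (∀ j, fderiv ℝ q₂ U (Pi.single j 1)
        - ∑ i, V i * fderiv ℝ (fun u => F₂ u i) U (Pi.single j 1)
      = (![0, 0, 0, g * h * v₂] : Fin 4 → ℝ) j) := by
  intro q₁ q₂ F₁ F₂ U V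
  have hU : U 0 ≠ 0 := hh.ne'
  refine ⟨fun j => ?_, fun j => ?_⟩ <;>
    simp only [q₁, q₂, F₁, F₂, Fin.sum_univ_four, Matrix.cons_val_zero, Matrix.cons_val_one,
      Matrix.cons_val_two, Matrix.cons_val_three, Matrix.head_cons, Matrix.tail_cons,
      (hasFDerivAt_energyFlux g _ hU).fderiv, (hasFDerivAt_momentumFlux g _ hU).fderiv,
      (hasFDerivAt_apply_mul_apply_div _ _ hU).fderiv, (hasFDerivAt_apply _ U).fderiv] <;>
    fin_cases j <;> simp [U, V] <;> field_simp <;> ring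
end

section
/- The temporal two-point flux Ũ = (⟨h⟩, ⟨h⟩⟨v₁⟩, ⟨h⟩⟨v₂⟩, ⟨b⟩) satisfies the energy-conservation condition (V_R - V_L)ᵀ Ũ = φ_R - φ_L, where V = (g(h+b) - (v₁²+v₂²)/2, v₁, v₂, gh + 2γgb) and φ = (1/2)gh² + ghb + γgb². -/
open Matrix

theorem temporal_EC_flux_general (g γ hL hR v₁L v₁R v₂L v₂R bL bR : ℝ) :
    let V : ℝ → ℝ → ℝ → ℝ → Fin 4 → ℝ := fun h v₁ v₂ b =>
      ![g * (h + b) - (v₁^2 + v₂^2) / 2, v₁, v₂, g * h + 2 * γ * g * b]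
    let φ : ℝ → ℝ → ℝ := fun h b => (1/2) * g * h^2 + g * h * b + γ * g * b^2
    let Ut : Fin 4 → ℝ :=
      ![(hL + hR) / 2, (hL + hR) / 2 * ((v₁L + v₁R) / 2),
        (hL + hR) / 2 * ((v₂L + v₂R) / 2), (bL + bR) / 2]
    (V hR v₁R v₂R bR - V hL v₁L v₂L bL) ⬝ᵥ Ut = φ hR bR - φ hL bL := by
  intro V φ Ut
  simp only [V, φ, Ut, dotProduct, Fin.sum_univ_four, Pi.sub_apply, cons_val_zero, cons_val_one,
    cons_val_two, cons_val_three, head_cons, tail_cons]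
  ring

/-- The temporal two-point EC flux Ũ = (⟨h⟩, ⟨h⟩⟨v₁⟩, ⟨h⟩⟨v₂⟩, ⟨b⟩) satisfies
(V_R − V_L)ᵀ Ũ = φ_R − φ_L. -/
theorem temporal_EC_flux (g γ hL hR v₁L v₁R v₂L v₂R bL bR : ℝ)
    (hhL : 0 < hL) (hhR : 0 < hR) :
    let V : ℝ → ℝ → ℝ → ℝ → Fin 4 → ℝ := fun h v₁ v₂ b =>
      ![g * (h + b) - (v₁^2 + v₂^2) / 2, v₁, v₂, g * h + 2 * γ * g * b]
    let φ : ℝ → ℝ → ℝ := fun h b => (1/2) * g * h^2 + g * h * b + γ * g * b^2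
    let Ut : Fin 4 → ℝ :=
      ![(hL + hR) / 2, (hL + hR) / 2 * ((v₁L + v₁R) / 2),
        (hL + hR) / 2 * ((v₂L + v₂R) / 2), (bL + bR) / 2]
    (V hR v₁R v₂R bR - V hL v₁L v₂L bL) ⬝ᵥ Ut = φ hR bR - φ hL bL :=
  temporal_EC_flux_general g γ hL hR v₁L v₁R v₂L v₂R bL bR
end

section
/- The two-point flux F̃₁ = (⟨h⟩⟨v₁⟩, ⟨h⟩⟨v₁⟩² + (g/2)⟨h²⟩ + g(⟨hb⟩ - ⟨h⟩⟨b⟩), ⟨h⟩⟨v₁⟩⟨v₂⟩, 0) satisfies (V_R - V_L)ᵀ F̃₁ = (ψ₁_R - ψ₁_L) - (g/2)((hv₁)_R - (hv₁)_L)(b_L + b_R), where ψ₁ = (1/2)gh²v₁ + ghv₁b and V = (g(h+b) - (v₁²+v₂²)/2, v₁, v₂, gh + 2γgb). -/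
open Matrix

theorem EC_flux_x1_general (g γ hL hR v₁L v₁R v₂L v₂R bL bR : ℝ) :
    let V : ℝ → ℝ → ℝ → ℝ → Fin 4 → ℝ := fun h v₁ v₂ b =>
      ![g * (h + b) - (v₁^2 + v₂^2) / 2, v₁, v₂, g * h + 2 * γ * g * b]
    let ψ₁ : ℝ → ℝ → ℝ → ℝ := fun h v₁ b => (1/2) * g * h^2 * v₁ + g * h * v₁ * b
    let ah := (hL + hR) / 2
    let av₁ := (v₁L + v₁R) / 2
    let av₂ := (v₂L + v₂R) / 2
    let ab := (bL + bR) / 2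
    let ah2 := (hL^2 + hR^2) / 2
    let ahb := (hL * bL + hR * bR) / 2
    let F₁ : Fin 4 → ℝ :=
      ![ah * av₁, ah * av₁^2 + g / 2 * ah2 + g * (ahb - ah * ab), ah * av₁ * av₂, 0]
    (V hR v₁R v₂R bR - V hL v₁L v₂L bL) ⬝ᵥ F₁
      = (ψ₁ hR v₁R bR - ψ₁ hL v₁L bL)
        - g / 2 * (hR * v₁R - hL * v₁L) * (bL + bR) := by
  simp only [dotProduct, Fin.sum_univ_four, Pi.sub_apply, cons_val_zero, cons_val_one,
    cons_val_two, cons_val_three, head_cons, tail_cons]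
  ring

/-- The two-point EC flux F̃₁ satisfies the EC condition
(V_R − V_L)ᵀ F̃₁ = ⟦ψ₁⟧ − (g/2)⟦hv₁⟧(b_L + b_R). -/
theorem EC_flux_x1 (g γ hL hR v₁L v₁R v₂L v₂R bL bR : ℝ)
    (hhL : 0 < hL) (hhR : 0 < hR) :
    let V : ℝ → ℝ → ℝ → ℝ → Fin 4 → ℝ := fun h v₁ v₂ b =>
      ![g * (h + b) - (v₁^2 + v₂^2) / 2, v₁, v₂, g * h + 2 * γ * g * b]
    let ψ₁ : ℝ → ℝ → ℝ → ℝ := fun h v₁ b => (1/2) * g * h^2 * v₁ + g * h * v₁ * b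
    let ah := (hL + hR) / 2
    let av₁ := (v₁L + v₁R) / 2
    let av₂ := (v₂L + v₂R) / 2
    let ab := (bL + bR) / 2
    let ah2 := (hL^2 + hR^2) / 2
    let ahb := (hL * bL + hR * bR) / 2
    let F₁ : Fin 4 → ℝ :=
      ![ah * av₁, ah * av₁^2 + g / 2 * ah2 + g * (ahb - ah * ab), ah * av₁ * av₂, 0]
    (V hR v₁R v₂R bR - V hL v₁L v₂L bL) ⬝ᵥ F₁
      = (ψ₁ hR v₁R bR - ψ₁ hL v₁L bL)
        - g / 2 * (hR * v₁R - hL * v₁L) * (bL + bR) :=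
  EC_flux_x1_general g γ hL hR v₁L v₁R v₂L v₂R bL bR
end

section
/- The two-point flux F̃₂ = (⟨h⟩⟨v₂⟩, ⟨h⟩⟨v₁⟩⟨v₂⟩, ⟨h⟩⟨v₂⟩² + (g/2)⟨h²⟩ + g(⟨hb⟩ - ⟨h⟩⟨b⟩), 0) satisfies (V_R - V_L)ᵀ F̃₂ = (ψ₂_R - ψ₂_L) - (g/2)((hv₂)_R - (hv₂)_L)(b_L + b_R), where ψ₂ = (1/2)gh²v₂ + ghv₂b and V = (g(h+b) - (v₁²+v₂²)/2, v₁, v₂, gh + 2γgb). -/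
open Matrix

theorem EC_flux_x2_general (g γ hL hR v₁L v₁R v₂L v₂R bL bR : ℝ) :
    let V : ℝ → ℝ → ℝ → ℝ → Fin 4 → ℝ := fun h v₁ v₂ b =>
      ![g * (h + b) - (v₁^2 + v₂^2) / 2, v₁, v₂, g * h + 2 * γ * g * b]
    let ψ₂ : ℝ → ℝ → ℝ → ℝ := fun h v₂ b => (1/2) * g * h^2 * v₂ + g * h * v₂ * b
    let ah := (hL + hR) / 2
    let av₁ := (v₁L + v₁R) / 2
    let av₂ := (v₂L + v₂R) / 2
    let ab := (bL + bR) / 2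
    let ah2 := (hL^2 + hR^2) / 2
    let ahb := (hL * bL + hR * bR) / 2
    let F₂ : Fin 4 → ℝ :=
      ![ah * av₂, ah * av₁ * av₂, ah * av₂^2 + g / 2 * ah2 + g * (ahb - ah * ab), 0]
    (V hR v₁R v₂R bR - V hL v₁L v₂L bL) ⬝ᵥ F₂
      = (ψ₂ hR v₂R bR - ψ₂ hL v₂L bL)
        - g / 2 * (hR * v₂R - hL * v₂L) * (bL + bR) := by
  simp only [cons_sub_cons, empty_sub_empty, cons_dotProduct_cons, dotProduct_of_isEmpty]
  ring

/-- The two-point EC flux F̃₂ satisfies the EC condition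
(V_R − V_L)ᵀ F̃₂ = ⟦ψ₂⟧ − (g/2)⟦hv₂⟧(b_L + b_R). -/
theorem EC_flux_x2 (g γ hL hR v₁L v₁R v₂L v₂R bL bR : ℝ)
    (hhL : 0 < hL) (hhR : 0 < hR) :
    let V : ℝ → ℝ → ℝ → ℝ → Fin 4 → ℝ := fun h v₁ v₂ b =>
      ![g * (h + b) - (v₁^2 + v₂^2) / 2, v₁, v₂, g * h + 2 * γ * g * b]
    let ψ₂ : ℝ → ℝ → ℝ → ℝ := fun h v₂ b => (1/2) * g * h^2 * v₂ + g * h * v₂ * b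
    let ah := (hL + hR) / 2
    let av₁ := (v₁L + v₁R) / 2
    let av₂ := (v₂L + v₂R) / 2
    let ab := (bL + bR) / 2
    let ah2 := (hL^2 + hR^2) / 2
    let ahb := (hL * bL + hR * bR) / 2
    let F₂ : Fin 4 → ℝ :=
      ![ah * av₂, ah * av₁ * av₂, ah * av₂^2 + g / 2 * ah2 + g * (ahb - ah * ab), 0]
    (V hR v₁R v₂R bR - V hL v₁L v₂L bL) ⬝ᵥ F₂
      = (ψ₂ hR v₂R bR - ψ₂ hL v₂L bL)
        - g / 2 * (hR * v₂R - hL * v₂L) * (bL + bR) :=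
  EC_flux_x2_general g γ hL hR v₁L v₁R v₂L v₂R bL bR
end

section
/- For the 1D shallow water system with flux Jacobian A = ∂F̂₁/∂Û of the original equations (Û = (h, hv₁, hv₂)), the scaled eigenvector matrix R = [[1,1,0],[v₁+c, v₁-c, 0],[v₂, v₂, 1]] · diag(1/√(2g), 1/√(2g), √h) with c = √(gh) satisfies A R = R Λ with Λ = diag(v₁+c, v₁-c, v₁), and R Rᵀ = ∂Û/∂V̂, where V̂ = (g(h+b) - (v₁²+v₂²)/2, v₁, v₂) are the entropy variables for fixed b. -/
/-!
The flux Jacobian at `Û = (h, hv₁, hv₂)` has the acoustic eigenvectors `(1, v₁ ± c, v₂)`, with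
eigenvalues `v₁ ± c` because `c² = gh`, and the shear eigenvector `(0, 0, 1)` with eigenvalue `v₁`.
Rescaling eigenvectors by a diagonal matrix keeps them eigenvectors, and `R Rᵀ = M D² Mᵀ` for
`R = M D`; with `D² = diag(1/(2g), 1/(2g), h)` this sum of rank-one terms is `∂Û/∂V̂`.
-/

open Matrix ContinuousLinearMap

theorem HasFDerivAt.fun_div {𝕜 E : Type*} [NontriviallyNormedField 𝕜] [NormedAddCommGroup E]
    [NormedSpace 𝕜 E] {f g : E → 𝕜} {f' g' : E →L[𝕜] 𝕜} {x : E}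
    (hf : HasFDerivAt f f' x) (hg : HasFDerivAt g g' x) (hx : g x ≠ 0) :
    HasFDerivAt (fun y => f y / g y) ((g x ^ 2)⁻¹ • (g x • f' - f x • g')) x := by
  simp only [div_eq_mul_inv]
  refine (hf.fun_mul ((hasDerivAt_inv hx).comp_hasFDerivAt x hg)).congr_fderiv ?_
  ext v
  simp
  field_simp
  ring

namespace Matrix

variable {m n R : Type*} [Fintype m] [Fintype n] [DecidableEq n] [CommSemiring R]

theorem mul_eq_mul_diagonal_of_forall_mulVec_eq_smul {A : Matrix m m R} {M : Matrix m n R}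
    {μ : n → R} (h : ∀ j, A *ᵥ Mᵀ j = μ j • Mᵀ j) : A * M = M * diagonal μ := by
  ext i j
  rw [mul_diagonal, mul_apply, mul_comm]
  simpa [mulVec, dotProduct] using congrFun (h j) i

theorem mul_mul_diagonal_of_mul_eq_mul_diagonal {A : Matrix m m R} {M : Matrix m n R}
    {μ : n → R} (h : A * M = M * diagonal μ) (d : n → R) :
    A * (M * diagonal d) = M * diagonal d * diagonal μ := by
  rw [← Matrix.mul_assoc, h, Matrix.mul_assoc, Matrix.mul_assoc, (commute_diagonal μ d).eq]

omit [Fintype m] in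
theorem mul_diagonal_mul_transpose_self (M : Matrix m n R) (d : n → R) :
    M * diagonal d * (M * diagonal d)ᵀ = M * diagonal (fun i => d i * d i) * Mᵀ := by
  rw [transpose_mul, diagonal_transpose, Matrix.mul_assoc, ← Matrix.mul_assoc (diagonal d),
    diagonal_mul_diagonal, Matrix.mul_assoc]

end Matrix

noncomputable def shallowWaterFlux (g : ℝ) (u : Fin 3 → ℝ) : Fin 3 → ℝ :=
  ![u 1, u 1 ^ 2 / u 0 + g / 2 * u 0 ^ 2, u 1 * u 2 / u 0]

def shallowWaterJacobian (g h v₁ v₂ : ℝ) : Matrix (Fin 3) (Fin 3) ℝ :=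
  !![0, 1, 0; g * h - v₁ ^ 2, 2 * v₁, 0; -(v₁ * v₂), v₂, v₁]

def shallowWaterEigenvectors (v₁ v₂ s : ℝ) : Matrix (Fin 3) (Fin 3) ℝ :=
  !![1, 1, 0; v₁ + s, v₁ - s, 0; v₂, v₂, 1]

theorem shallowWaterFlux_jacobian (g : ℝ) {h : ℝ} (hh : h ≠ 0) (v₁ v₂ : ℝ) :
    (Matrix.of fun i j =>
      fderiv ℝ (fun u => shallowWaterFlux g u i) ![h, h * v₁, h * v₂] (Pi.single j 1)) =
      shallowWaterJacobian g h v₁ v₂ := by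
  set p : Fin 3 → ℝ := ![h, h * v₁, h * v₂]
  have coord (k : Fin 3) :
      HasFDerivAt (fun u : Fin 3 → ℝ => u k) (proj k : (Fin 3 → ℝ) →L[ℝ] ℝ) p :=
    hasFDerivAt_apply k p
  have row₂ := (((coord 1).pow 2).fun_div (coord 0) hh).fun_add
    (((coord 0).pow 2).const_mul (g / 2))
  have row₃ := ((coord 1).fun_mul (coord 2)).fun_div (coord 0) hh
  ext i j
  fin_cases i <;> fin_cases j <;>
    simp [shallowWaterFlux, shallowWaterJacobian, (coord 1).fderiv, row₂.fderiv, row₃.fderiv, p]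
  all_goals field_simp
  ring

section Eigenvectors

variable {g h v₁ v₂ s : ℝ}

theorem shallowWaterJacobian_mulVec_acoustic {μ : ℝ} (hμ : (μ - v₁) ^ 2 = g * h) :
    shallowWaterJacobian g h v₁ v₂ *ᵥ ![1, μ, v₂] = μ • ![1, μ, v₂] := by
  rw [shallowWaterJacobian, ← hμ]
  ext i
  fin_cases i <;> simp [mulVec, dotProduct, Fin.sum_univ_three] <;> ring

theorem shallowWaterJacobian_mulVec_shear :
    shallowWaterJacobian g h v₁ v₂ *ᵥ ![0, 0, 1] = v₁ • ![0, 0, 1] := by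
  ext i
  fin_cases i <;> simp [shallowWaterJacobian, mulVec, dotProduct, Fin.sum_univ_three]

theorem shallowWaterJacobian_mul_eigenvectors (hs : s ^ 2 = g * h) :
    shallowWaterJacobian g h v₁ v₂ * shallowWaterEigenvectors v₁ v₂ s =
      shallowWaterEigenvectors v₁ v₂ s * diagonal ![v₁ + s, v₁ - s, v₁] := by
  have columns : (shallowWaterEigenvectors v₁ v₂ s)ᵀ = !![1, v₁ + s, v₂; 1, v₁ - s, v₂; 0, 0, 1] := by
    ext i j
    fin_cases i <;> fin_cases j <;> rfl
  refine mul_eq_mul_diagonal_of_forall_mulVec_eq_smul fun j => ?_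
  rw [columns]
  fin_cases j
  · exact shallowWaterJacobian_mulVec_acoustic (by rwa [add_sub_cancel_left])
  · exact shallowWaterJacobian_mulVec_acoustic (by rwa [sub_sub_cancel_left, neg_sq])
  · exact shallowWaterJacobian_mulVec_shear

theorem shallowWaterEigenvectors_mul_diagonal_mul_transpose (hg : g ≠ 0) (hs : s ^ 2 = g * h) :
    shallowWaterEigenvectors v₁ v₂ s * diagonal ![1 / (2 * g), 1 / (2 * g), h] *
      (shallowWaterEigenvectors v₁ v₂ s)ᵀ =
      (1 / g) • !![1, v₁, v₂; v₁, v₁ ^ 2 + g * h, v₁ * v₂; v₂, v₁ * v₂, v₂ ^ 2 + g * h] := by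
  obtain rfl : h = s ^ 2 / g := by field_simp; linarith
  ext i j
  simp only [shallowWaterEigenvectors, mul_apply, Fin.sum_univ_three]
  fin_cases i <;> fin_cases j <;> simp <;> field_simp <;> ring

end Eigenvectors

theorem scaled_eigenvectors_general (g h v₁ v₂ : ℝ) (hg : 0 < g) (hh : 0 < h) :
    let c := Real.sqrt (g * h)
    let Fhat : (Fin 3 → ℝ) → Fin 3 → ℝ := fun u =>
      ![u 1, (u 1)^2 / u 0 + g / 2 * (u 0)^2, u 1 * u 2 / u 0]
    -- flux Jacobian A = ∂F̂₁/∂Û evaluated at Û = (h, hv₁, hv₂)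
    let A : Matrix (Fin 3) (Fin 3) ℝ := Matrix.of fun i j =>
      fderiv ℝ (fun u => Fhat u i) ![h, h * v₁, h * v₂] (Pi.single j 1)
    let R : Matrix (Fin 3) (Fin 3) ℝ :=
      !![1, 1, 0; v₁ + c, v₁ - c, 0; v₂, v₂, 1] *
        Matrix.diagonal ![1 / Real.sqrt (2 * g), 1 / Real.sqrt (2 * g), Real.sqrt h]
    let Λ : Matrix (Fin 3) (Fin 3) ℝ := Matrix.diagonal ![v₁ + c, v₁ - c, v₁]
    -- ∂Û/∂V̂ : the inverse Jacobian of the change to the entropy variables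
    let H : Matrix (Fin 3) (Fin 3) ℝ :=
      (1 / g) • !![1, v₁, v₂; v₁, v₁^2 + g * h, v₁ * v₂; v₂, v₁ * v₂, v₂^2 + g * h]
    A * R = R * Λ ∧ R * Rᵀ = H := by
  intro c Fhat A R Λ H
  have hc : c ^ 2 = g * h := Real.sq_sqrt (by positivity)
  have hA : A = shallowWaterJacobian g h v₁ v₂ := shallowWaterFlux_jacobian g hh.ne' v₁ v₂
  have hscale : (fun i => ![1 / √(2 * g), 1 / √(2 * g), √h] i * ![1 / √(2 * g), 1 / √(2 * g), √h] i)
      = ![1 / (2 * g), 1 / (2 * g), h] := by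
    have h2g : √(2 * g) * √(2 * g) = 2 * g := Real.mul_self_sqrt (by positivity)
    ext i
    fin_cases i <;> simp only [Fin.zero_eta, Fin.mk_one, Fin.reduceFinMk, cons_val,
      div_mul_div_comm, one_mul, h2g, Real.mul_self_sqrt hh.le]
  constructor
  · rw [hA]
    exact mul_mul_diagonal_of_mul_eq_mul_diagonal (shallowWaterJacobian_mul_eigenvectors hc) _
  · change shallowWaterEigenvectors v₁ v₂ c * _ * (shallowWaterEigenvectors v₁ v₂ c * _)ᵀ = H
    rw [mul_diagonal_mul_transpose_self, hscale]
    exact shallowWaterEigenvectors_mul_diagonal_mul_transpose hg.ne' hc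

/-- The scaled eigenvector matrix R of the 1D shallow water flux Jacobian
satisfies A R = R Λ with Λ = diag(v₁+c, v₁−c, v₁), and R Rᵀ = ∂Û/∂V̂. -/
theorem scaled_eigenvectors (g h v₁ v₂ b : ℝ) (hg : 0 < g) (hh : 0 < h) :
    let c := Real.sqrt (g * h)
    let Fhat : (Fin 3 → ℝ) → Fin 3 → ℝ := fun u =>
      ![u 1, (u 1)^2 / u 0 + g / 2 * (u 0)^2, u 1 * u 2 / u 0]
    -- flux Jacobian A = ∂F̂₁/∂Û evaluated at Û = (h, hv₁, hv₂)
    let A : Matrix (Fin 3) (Fin 3) ℝ := Matrix.of fun i j =>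
      fderiv ℝ (fun u => Fhat u i) ![h, h * v₁, h * v₂] (Pi.single j 1)
    let R : Matrix (Fin 3) (Fin 3) ℝ :=
      !![1, 1, 0; v₁ + c, v₁ - c, 0; v₂, v₂, 1] *
        Matrix.diagonal ![1 / Real.sqrt (2 * g), 1 / Real.sqrt (2 * g), Real.sqrt h]
    let Λ : Matrix (Fin 3) (Fin 3) ℝ := Matrix.diagonal ![v₁ + c, v₁ - c, v₁]
    -- ∂Û/∂V̂ : the inverse Jacobian of the change to the entropy variables
    let H : Matrix (Fin 3) (Fin 3) ℝ :=
      (1 / g) • !![1, v₁, v₂; v₁, v₁^2 + g * h, v₁ * v₂; v₂, v₁ * v₂, v₂^2 + g * h]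
    A * R = R * Λ ∧ R * Rᵀ = H :=
  scaled_eigenvectors_general g h v₁ v₂ hg hh
end
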